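/- arXiv:1807.03647 — 5 statements merged into one kernel-verified Lean document; each statement's English description precedes it below -/
import Mathlib

section
/- Let Ω ⊂ ℝ^d be a measurable set with finite Lebesgue measure 𝓛^d(Ω) < ∞. Let (u_n)_{n∈ℕ} be a sequence of integrable functions u_n : Ω → ℝ^m such that 𝓛^d( ⋂_{n∈ℕ} ⋃_{m ≥ n} { x ∈ Ω : |u_m(x) − u_n(x)| > 1 } ) = 0. Then there exist a subsequence (u_{n_j})_j and a nondecreasing, concave function ψ : [0,∞) → [0,∞) with ψ(t) → ∞ as t → ∞, such that sup_j ∫_Ω ψ(|u_{n_j}(x)|) dx < ∞. -/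
/-!
Let `escapeSet u n` be the set where some later `u m` leaves the unit ball around `u n`. Off the
null set `⋂ n, escapeSet u n` each point misses some `escapeSet u n`, and there every `‖u k‖` is at
most `1 + ∑_{i ≤ n} ‖u i‖`. The partial intersections `⋂_{n ≤ N} escapeSet u n` have measure
tending to zero, so along a subsequence `φ` the whole family `‖u (φ i)‖` is dominated, off a set
of measure `2⁻¹ ^ j`, by the single function `g j = 1 + ∑_{i ≤ φ j} ‖u i‖`. This yields thresholds
`T j` with `μ {T j < ‖u (φ i)‖} ≤ 2 * 2⁻¹ ^ j` for all `i`. If moreover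
`2 ^ (j + 1) * T j ≤ T (j + 1)`, the concave function `ψ t = ∑ j, min t (T (j + 1)) / T (j + 1)`
is unbounded, while `∫ ψ ‖u (φ i)‖ ≤ ∑ j, (T j / T (j + 1) * μ univ + μ {T j < ‖u (φ i)‖})` is
bounded by a geometric series.
-/

open MeasureTheory Filter Set
open scoped Topology ENNReal

structure IsFastGrowing (T : ℕ → ℝ) : Prop where
  one_le : ∀ j, 1 ≤ T j
  two_pow_mul_le : ∀ j, 2 ^ (j + 1) * T j ≤ T (j + 1)

noncomputable def concaveProfile (T : ℕ → ℝ) (t : ℝ) : ℝ :=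
  ∑' j, min t (T (j + 1)) / T (j + 1)

lemma ConcaveOn.tsum {ι E : Type*} [AddCommGroup E] [Module ℝ E] {s : Set E} {f : ι → E → ℝ}
    (hs : Convex ℝ s) (hf : ∀ j, ConcaveOn ℝ s (f j)) (hsum : ∀ x ∈ s, Summable fun j => f j x) :
    ConcaveOn ℝ s fun x => ∑' j, f j x := by
  refine ⟨hs, fun x hx y hy a b ha hb hab => ?_⟩
  calc a • ∑' j, f j x + b • ∑' j, f j y = ∑' j, (a • f j x + b • f j y) := by
        simp only [smul_eq_mul]
        rw [((hsum x hx).mul_left a).tsum_add ((hsum y hy).mul_left b), tsum_mul_left,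
          tsum_mul_left]
    _ ≤ ∑' j, f j (a • x + b • y) :=
        Summable.tsum_le_tsum (fun j => (hf j).2 hx hy ha hb hab)
          (((hsum x hx).mul_left a).add ((hsum y hy).mul_left b))
          (hsum _ (hs hx hy ha hb hab))

lemma concaveOn_min_div {c : ℝ} (hc : 0 ≤ c) : ConcaveOn ℝ univ fun t => min t c / c := by
  have := ((concaveOn_id convex_univ).inf (concaveOn_const c convex_univ)).smul (inv_nonneg.2 hc)
  simpa only [div_eq_inv_mul, smul_eq_mul, Pi.inf_apply, id] using this

lemma lintegral_ofReal_min_div_le {α : Type*} [MeasurableSpace α] {μ : Measure α} {f : α → ℝ}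
    (hf : AEStronglyMeasurable f μ) (s : ℝ) {t : ℝ} (ht : 0 < t) :
    ∫⁻ x, ENNReal.ofReal (min (f x) t / t) ∂μ
      ≤ ENNReal.ofReal (s / t) * μ univ + μ {x | s < f x} := by
  have hpoint : ∀ x, ENNReal.ofReal (min (f x) t / t)
      ≤ ENNReal.ofReal (s / t) + {x | s < f x}.indicator 1 x := by
    intro x
    by_cases hx : s < f x
    · rw [indicator_of_mem (show x ∈ {x | s < f x} from hx), Pi.one_apply]
      refine le_add_left (ENNReal.ofReal_le_one.2 ?_)
      exact (div_le_one ht).2 (min_le_right _ _)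
    · rw [indicator_of_notMem (show x ∉ {x | s < f x} from hx), add_zero]
      exact ENNReal.ofReal_le_ofReal <|
        div_le_div_of_nonneg_right ((min_le_left _ _).trans (not_lt.1 hx)) ht.le
  calc ∫⁻ x, ENNReal.ofReal (min (f x) t / t) ∂μ
      ≤ ∫⁻ x, (ENNReal.ofReal (s / t) + {x | s < f x}.indicator 1 x) ∂μ := lintegral_mono hpoint
    _ = ENNReal.ofReal (s / t) * μ univ + μ {x | s < f x} := by
        rw [lintegral_add_left measurable_const, lintegral_const,
          lintegral_indicator_one₀ (nullMeasurableSet_lt aemeasurable_const hf.aemeasurable)]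

namespace IsFastGrowing

variable {T : ℕ → ℝ} (hT : IsFastGrowing T)
include hT

lemma pos (j : ℕ) : 0 < T j := one_pos.trans_le (hT.one_le j)

lemma div_succ_le (j : ℕ) : T j / T (j + 1) ≤ 2⁻¹ ^ (j + 1) := by
  rw [div_le_iff₀ (hT.pos _), inv_pow, inv_mul_eq_div, le_div_iff₀ (by positivity), mul_comm]
  exact hT.two_pow_mul_le j

lemma inv_succ_le (j : ℕ) : (T (j + 1))⁻¹ ≤ 2⁻¹ ^ (j + 1) :=
  (inv_eq_one_div (T (j + 1)) ▸ div_le_div_of_nonneg_right (hT.one_le j) (hT.pos _).le).trans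
    (hT.div_succ_le j)

lemma monotone : Monotone T := by
  refine monotone_nat_of_le_succ fun j => ?_
  have h2 : (1 : ℝ) ≤ 2 ^ (j + 1) := one_le_pow₀ (by norm_num)
  nlinarith [hT.two_pow_mul_le j, hT.one_le j]

lemma summable_concaveProfile (t : ℝ) : Summable fun j => min t (T (j + 1)) / T (j + 1) := by
  refine Summable.of_norm_bounded (g := fun j => |t| * 2⁻¹ ^ (j + 1)) ?_ fun j => ?_
  · exact ((summable_nat_add_iff 1).2 (summable_geometric_of_lt_one (by norm_num)
      (by norm_num : (2⁻¹ : ℝ) < 1))).mul_left _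
  · have hTj := hT.pos (j + 1)
    have habs : |min t (T (j + 1))| ≤ |t| :=
      abs_le.2 ⟨le_min (neg_abs_le t) ((neg_nonpos.2 (abs_nonneg t)).trans hTj.le),
        min_le_of_left_le (le_abs_self t)⟩
    rw [Real.norm_eq_abs, abs_div, abs_of_pos hTj, div_eq_mul_inv]
    exact mul_le_mul habs (hT.inv_succ_le j) (inv_nonneg.2 hTj.le) (abs_nonneg t)

lemma concaveProfile_nonneg {t : ℝ} (ht : 0 ≤ t) : 0 ≤ concaveProfile T t :=
  tsum_nonneg fun _ => div_nonneg (le_min ht (hT.pos _).le) (hT.pos _).le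

lemma monotone_concaveProfile : Monotone (concaveProfile T) := fun s t hst =>
  Summable.tsum_le_tsum
    (fun _ => div_le_div_of_nonneg_right (min_le_min_right _ hst) (hT.pos _).le)
    (hT.summable_concaveProfile s) (hT.summable_concaveProfile t)

lemma concaveOn_concaveProfile : ConcaveOn ℝ univ (concaveProfile T) :=
  ConcaveOn.tsum convex_univ (fun j => concaveOn_min_div (hT.pos (j + 1)).le)
    fun t _ => hT.summable_concaveProfile t

lemma le_concaveProfile (k : ℕ) : (k : ℝ) + 1 ≤ concaveProfile T (T (k + 1)) := by
  have hone : ∀ j ∈ Finset.range (k + 1), min (T (k + 1)) (T (j + 1)) / T (j + 1) = 1 := by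
    intro j hj
    rw [min_eq_right (hT.monotone (by simpa using Finset.mem_range.1 hj)),
      div_self (hT.pos _).ne']
  calc (k : ℝ) + 1 = ∑ j ∈ Finset.range (k + 1), min (T (k + 1)) (T (j + 1)) / T (j + 1) := by
        simp [Finset.sum_congr rfl hone]
    _ ≤ concaveProfile T (T (k + 1)) :=
        Summable.sum_le_tsum _ (fun j _ => div_nonneg (le_min (hT.pos _).le (hT.pos _).le)
          (hT.pos _).le) (hT.summable_concaveProfile _)

lemma tendsto_concaveProfile : Tendsto (concaveProfile T) atTop atTop := by
  refine tendsto_atTop_atTop.2 fun b => ⟨T (⌈b⌉₊ + 1), fun t ht => ?_⟩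
  calc b ≤ (⌈b⌉₊ : ℝ) + 1 := (Nat.le_ceil b).trans (by linarith)
    _ ≤ concaveProfile T (T (⌈b⌉₊ + 1)) := hT.le_concaveProfile _
    _ ≤ concaveProfile T t := hT.monotone_concaveProfile ht

variable {α : Type*} [MeasurableSpace α] {μ : Measure α}

lemma lintegral_ofReal_concaveProfile_le {f : α → ℝ} (hf : AEStronglyMeasurable f μ)
    (hf0 : ∀ x, 0 ≤ f x) {c : ℝ≥0∞} (htail : ∀ j, μ {x | T j < f x} ≤ 2⁻¹ ^ j * c) :
    ∫⁻ x, ENNReal.ofReal (concaveProfile T (f x)) ∂μ ≤ 2 * (μ univ + c) := by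
  have hterm : ∀ j, ∫⁻ x, ENNReal.ofReal (min (f x) (T (j + 1)) / T (j + 1)) ∂μ
      ≤ 2⁻¹ ^ j * (μ univ + c) := by
    intro j
    have hratio : ENNReal.ofReal (T j / T (j + 1)) ≤ 2⁻¹ ^ j := by
      refine (ENNReal.ofReal_le_ofReal ((hT.div_succ_le j).trans
        (pow_le_pow_of_le_one (by norm_num) (by norm_num) j.le_succ))).trans_eq ?_
      rw [ENNReal.ofReal_pow (by norm_num), ENNReal.ofReal_inv_of_pos two_pos, ENNReal.ofReal_ofNat]
    calc _ ≤ ENNReal.ofReal (T j / T (j + 1)) * μ univ + μ {x | T j < f x} :=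
          lintegral_ofReal_min_div_le hf _ (hT.pos _)
      _ ≤ 2⁻¹ ^ j * μ univ + 2⁻¹ ^ j * c := add_le_add (mul_le_mul_left hratio _) (htail j)
      _ = 2⁻¹ ^ j * (μ univ + c) := (mul_add _ _ _).symm
  calc ∫⁻ x, ENNReal.ofReal (concaveProfile T (f x)) ∂μ
      = ∑' j, ∫⁻ x, ENNReal.ofReal (min (f x) (T (j + 1)) / T (j + 1)) ∂μ := by
        rw [← lintegral_tsum fun j => ((hf.aemeasurable.min aemeasurable_const).div_const
          _).ennreal_ofReal]
        refine lintegral_congr fun x => ENNReal.ofReal_tsum_of_nonneg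
          (fun j => div_nonneg (le_min (hf0 x) (hT.pos _).le) (hT.pos _).le)
          (hT.summable_concaveProfile _)
    _ ≤ ∑' j, 2⁻¹ ^ j * (μ univ + c) := ENNReal.tsum_le_tsum hterm
    _ = 2 * (μ univ + c) := by
        rw [ENNReal.tsum_mul_right, ENNReal.tsum_geometric, ENNReal.one_sub_inv_two, inv_inv]

lemma integral_concaveProfile_le [IsFiniteMeasure μ] {f : α → ℝ} (hf : AEStronglyMeasurable f μ)
    (hf0 : ∀ x, 0 ≤ f x) {c : ℝ≥0∞} (hc : c ≠ ∞) (htail : ∀ j, μ {x | T j < f x} ≤ 2⁻¹ ^ j * c) :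
    ∫ x, concaveProfile T (f x) ∂μ ≤ (2 * (μ univ + c)).toReal := by
  refine (Real.le_norm_self _).trans <| (norm_integral_le_lintegral_norm _).trans <|
    ENNReal.toReal_mono (by finiteness) ?_
  simpa only [Real.norm_eq_abs, abs_of_nonneg (hT.concaveProfile_nonneg (hf0 _))]
    using hT.lintegral_ofReal_concaveProfile_le hf hf0 htail

end IsFastGrowing

noncomputable def fastGrowingMajorant (B : ℕ → ℝ) : ℕ → ℝ
  | 0 => max 1 (B 0)
  | j + 1 => max (2 ^ (j + 1) * fastGrowingMajorant B j) (B (j + 1))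

lemma isFastGrowing_fastGrowingMajorant (B : ℕ → ℝ) : IsFastGrowing (fastGrowingMajorant B) where
  one_le j := by
    induction j with
    | zero => exact le_max_left _ _
    | succ j ih =>
        have h2 : (1 : ℝ) ≤ 2 ^ (j + 1) := one_le_pow₀ (by norm_num)
        exact (one_le_mul_of_one_le_of_one_le h2 ih).trans (le_max_left _ _)
  two_pow_mul_le _ := le_max_left _ _

lemma le_fastGrowingMajorant (B : ℕ → ℝ) : ∀ j, B j ≤ fastGrowingMajorant B j
  | 0 => le_max_right _ _
  | _ + 1 => le_max_right _ _

lemma exists_measure_lt_le {α : Type*} [MeasurableSpace α] {μ : Measure α} [IsFiniteMeasure μ]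
    {g : α → ℝ} (hg : AEMeasurable g μ) {ε : ℝ≥0∞} (hε : 0 < ε) :
    ∃ B : ℝ, μ {x | B < g x} ≤ ε := by
  have hanti : Antitone fun k : ℕ => {x | (k : ℝ) < g x} :=
    fun k l hkl x (hx : (l : ℝ) < g x) => show (k : ℝ) < g x from (Nat.cast_le.2 hkl).trans_lt hx
  have hempty : ⋂ k : ℕ, {x | (k : ℝ) < g x} = ∅ :=
    eq_empty_of_forall_notMem fun x hx =>
      (exists_nat_ge (g x)).elim fun k hk => (mem_iInter.1 hx k).not_ge hk
  have hlim := tendsto_measure_iInter_atTop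
    (fun k => nullMeasurableSet_lt aemeasurable_const hg) hanti ⟨0, measure_ne_top μ _⟩
  rw [hempty, measure_empty] at hlim
  obtain ⟨k, hk⟩ := (hlim.eventually (gt_mem_nhds hε)).exists
  exact ⟨k, hk.le⟩

section EscapeSet

variable {α E : Type*} [NormedAddCommGroup E]

def escapeSet (u : ℕ → α → E) (n : ℕ) : Set α :=
  ⋃ m ∈ Ici n, {x | ‖u m x - u n x‖ > 1}

lemma norm_le_of_notMem_escapeSet {u : ℕ → α → E} {x : α} {n N : ℕ} (hnN : n ≤ N)
    (hx : x ∉ escapeSet u n) (k : ℕ) : ‖u k x‖ ≤ 1 + ∑ i ∈ Finset.range (N + 1), ‖u i x‖ := by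
  have hsum : ∀ i ≤ N, ‖u i x‖ ≤ ∑ i ∈ Finset.range (N + 1), ‖u i x‖ := fun i hi =>
    Finset.single_le_sum (f := fun i => ‖u i x‖) (fun _ _ => norm_nonneg _)
      (Finset.mem_range.2 (Nat.lt_succ_of_le hi))
  rcases le_or_gt n k with hnk | hkn
  · have hclose : ‖u k x - u n x‖ ≤ 1 := by
      by_contra! hfar
      exact hx (mem_biUnion (mem_Ici.2 hnk) hfar)
    linarith [norm_le_norm_add_norm_sub' (u k x) (u n x), hsum n hnN]
  · linarith [hsum k (hkn.le.trans hnN)]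

variable [MeasurableSpace α] {μ : Measure α}

lemma nullMeasurableSet_escapeSet {u : ℕ → α → E} (hu : ∀ n, AEStronglyMeasurable (u n) μ)
    (n : ℕ) : NullMeasurableSet (escapeSet u n) μ :=
  .biUnion (to_countable _) fun m _ =>
    nullMeasurableSet_lt aemeasurable_const ((hu m).sub (hu n)).norm.aemeasurable

theorem exists_subseq_isFastGrowing_tail_le [IsFiniteMeasure μ]
    {u : ℕ → α → E} (hu : ∀ n, AEStronglyMeasurable (u n) μ)
    (hescape : μ (⋂ n, escapeSet u n) = 0) :
    ∃ φ : ℕ → ℕ, StrictMono φ ∧ ∃ T : ℕ → ℝ, IsFastGrowing T ∧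
      ∀ i j, μ {x | T j < ‖u (φ i) x‖} ≤ 2⁻¹ ^ j * 2 := by
  have hlim : Tendsto (fun N => μ (⋂ n ≤ N, escapeSet u n)) atTop (𝓝 0) :=
    hescape ▸ tendsto_measure_iInter_le (nullMeasurableSet_escapeSet hu) ⟨0, measure_ne_top μ _⟩
  obtain ⟨φ, hφ, hφescape⟩ : ∃ φ : ℕ → ℕ, StrictMono φ ∧
      ∀ j, μ (⋂ n ≤ φ j, escapeSet u n) ≤ 2⁻¹ ^ j :=
    extraction_forall_of_eventually fun j =>
      (hlim.eventually (gt_mem_nhds (ENNReal.pow_pos (by norm_num) j))).mono fun _ => le_of_lt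
  set g : ℕ → α → ℝ := fun j x => 1 + ∑ i ∈ Finset.range (φ j + 1), ‖u i x‖
  have hg : ∀ j, AEMeasurable (g j) μ := fun j =>
    aemeasurable_const.add (Finset.aemeasurable_fun_sum _ fun i _ => (hu i).norm.aemeasurable)
  choose B hB using fun j =>
    exists_measure_lt_le (hg j) (ENNReal.pow_pos (by norm_num : (0 : ℝ≥0∞) < 2⁻¹) j)
  refine ⟨φ, hφ, fastGrowingMajorant B, isFastGrowing_fastGrowingMajorant B, fun i j => ?_⟩
  have hcover : {x | fastGrowingMajorant B j < ‖u (φ i) x‖}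
      ⊆ (⋂ n ≤ φ j, escapeSet u n) ∪ {x | B j < g j x} := by
    intro x hx
    by_cases hD : x ∈ ⋂ n ≤ φ j, escapeSet u n
    · exact Or.inl hD
    · simp only [mem_iInter, not_forall] at hD
      obtain ⟨n, hn, hxn⟩ := hD
      exact Or.inr ((le_fastGrowingMajorant B j).trans_lt
        (hx.trans_le (norm_le_of_notMem_escapeSet hn hxn _)))
  calc μ {x | fastGrowingMajorant B j < ‖u (φ i) x‖}
      ≤ μ (⋂ n ≤ φ j, escapeSet u n) + μ {x | B j < g j x} :=
        (measure_mono hcover).trans (measure_union_le _ _)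
    _ ≤ 2⁻¹ ^ j + 2⁻¹ ^ j := add_le_add (hφescape j) (hB j)
    _ = 2⁻¹ ^ j * 2 := (mul_two _).symm

theorem exists_subseq_concave_integral_le [IsFiniteMeasure μ]
    {u : ℕ → α → E} (hu : ∀ n, AEStronglyMeasurable (u n) μ)
    (hescape : μ (⋂ n, escapeSet u n) = 0) :
    ∃ φ : ℕ → ℕ, StrictMono φ ∧ ∃ ψ : ℝ → ℝ,
      MonotoneOn ψ (Ici 0) ∧ ConcaveOn ℝ (Ici 0) ψ ∧ (∀ t ≥ (0 : ℝ), 0 ≤ ψ t) ∧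
      Tendsto ψ atTop atTop ∧ ∃ C : ℝ, ∀ j, ∫ x, ψ ‖u (φ j) x‖ ∂μ ≤ C := by
  obtain ⟨φ, hφ, T, hT, htail⟩ := exists_subseq_isFastGrowing_tail_le hu hescape
  exact ⟨φ, hφ, concaveProfile T, hT.monotone_concaveProfile.monotoneOn _,
    hT.concaveOn_concaveProfile.subset (subset_univ _) (convex_Ici 0),
    fun _ => hT.concaveProfile_nonneg, hT.tendsto_concaveProfile, _,
    fun j => hT.integral_concaveProfile_le (hu (φ j)).norm (fun _ => norm_nonneg _)
      ENNReal.ofNat_ne_top (htail j)⟩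

end EscapeSet

/-- **Lemma 2.1 (concave function lemma).** If `Ω ⊆ ℝ^d` has finite Lebesgue measure and
`(u_n)` is a sequence of integrable functions `Ω → ℝ^m` such that the set
`⋂_n ⋃_{m ≥ n} {x ∈ Ω : |u_m(x) - u_n(x)| > 1}` is Lebesgue-negligible, then along a
subsequence there is a nondecreasing concave `ψ : [0,∞) → [0,∞)` with `ψ(t) → ∞` such that
`sup_j ∫_Ω ψ(|u_{n_j}|) dx < ∞`. -/
theorem stmt0 {d m : ℕ} (Ω : Set (EuclideanSpace ℝ (Fin d)))
    (hΩmeas : MeasurableSet Ω) (hΩfin : volume Ω < ⊤)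
    (u : ℕ → EuclideanSpace ℝ (Fin d) → EuclideanSpace ℝ (Fin m))
    (hint : ∀ n, IntegrableOn (u n) Ω)
    (hcond : volume (Ω ∩ ⋂ n, ⋃ m' ∈ Ici n, {x | ‖u m' x - u n x‖ > 1}) = 0) :
    ∃ φ : ℕ → ℕ, StrictMono φ ∧ ∃ ψ : ℝ → ℝ,
      MonotoneOn ψ (Ici 0) ∧ ConcaveOn ℝ (Ici 0) ψ ∧ (∀ t ≥ (0:ℝ), 0 ≤ ψ t) ∧
      Tendsto ψ atTop atTop ∧
      ∃ C : ℝ, ∀ j, ∫ x in Ω, ψ ‖u (φ j) x‖ ≤ C := by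
  have : IsFiniteMeasure (volume.restrict Ω) := isFiniteMeasure_restrict.2 hΩfin.ne
  refine exists_subseq_concave_integral_le (fun n => (hint n).aestronglyMeasurable) ?_
  rwa [Measure.restrict_apply' hΩmeas, inter_comm]
end

section
/- Let N ∈ ℕ, let γ ≥ 2 be a real number, and let R₀ > 0. Then for every finite set of points {x_1, …, x_n} ⊂ ℝ^m with n ≤ N there exist M ≤ N, centers y_1, …, y_M ∈ ℝ^m and radii r_1, …, r_M such that the open balls B_{r_1}(y_1), …, B_{r_M}(y_M) are pairwise disjoint, their union contains {x_1, …, x_n}, the radii satisfy R₀ ≤ r_k ≤ (2γ)^N R₀ for every k = 1, …, M, and the centers satisfy |y_i − y_j| > γ · max_{k=1,…,M} r_k for all 1 ≤ i < j ≤ M. -/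
/-!
Start from the balls of radius `R₀` around the points themselves. As long as two centers are
at distance at most `γ r`, drop one of them and enlarge the common radius from `r` to
`(1 + γ) r ≤ 2γ r`: by the triangle inequality the remaining balls still cover. Each step
removes a center, so after at most `n` steps the centers are `γ r`-separated with
`r ≤ (2γ)^n R₀`, and for `γ ≥ 2` balls of radius `r` around them are disjoint.
-/

open Set Metric

section SeparatedCover

variable {X : Type*} [PseudoMetricSpace X]

theorem iUnion_ball_subset_iUnion_ball_succAbove {M : ℕ} (y : Fin (M + 1) → X)
    {i j : Fin (M + 1)} (hij : i ≠ j) {γ r : ℝ} (hd : dist (y j) (y i) ≤ γ * r) :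
    ⋃ k, ball (y k) r ⊆ ⋃ k, ball (y (j.succAbove k)) ((1 + γ) * r) := by
  have hγr : 0 ≤ γ * r := dist_nonneg.trans hd
  intro p hp
  obtain ⟨k, hk⟩ := mem_iUnion.mp hp
  rw [mem_ball] at hk
  rw [mem_iUnion]
  by_cases hkj : k = j
  · subst hkj
    obtain ⟨i', rfl⟩ := Fin.exists_succAbove_eq hij
    refine ⟨i', mem_ball.mpr ?_⟩
    calc dist p (y (k.succAbove i')) ≤ dist p (y k) + dist (y k) (y (k.succAbove i')) :=
          dist_triangle _ _ _
      _ < (1 + γ) * r := by linarith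
  · obtain ⟨k', rfl⟩ := Fin.exists_succAbove_eq hkj
    exact ⟨k', ball_subset_ball (by linarith) (mem_ball.mpr hk)⟩

theorem exists_separated_ball_cover {S : Set X} {γ : ℝ} (hγ : 1 ≤ γ) :
    ∀ {M : ℕ} (y : Fin M → X) {r : ℝ}, 0 ≤ r → S ⊆ ⋃ k, ball (y k) r →
      ∃ M' ≤ M, ∃ (y' : Fin M' → X) (r' : ℝ), r ≤ r' ∧ r' ≤ (2 * γ) ^ M * r ∧
        S ⊆ ⋃ k, ball (y' k) r' ∧ Pairwise fun i j => γ * r' < dist (y' i) (y' j) := by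
  have h2γ : 1 ≤ 2 * γ := by linarith
  intro M
  induction M with
  | zero =>
    intro y r _ hS
    exact ⟨0, le_rfl, y, r, le_rfl, by simp, hS, fun i => i.elim0⟩
  | succ M ih =>
    intro y r hr hS
    by_cases hsep : Pairwise fun i j => γ * r < dist (y i) (y j)
    · exact ⟨M + 1, le_rfl, y, r, le_rfl, le_mul_of_one_le_left hr (one_le_pow₀ h2γ), hS, hsep⟩
    obtain ⟨j, i, hji, hd⟩ : ∃ j i, j ≠ i ∧ dist (y j) (y i) ≤ γ * r := by
      simpa [Pairwise] using hsep
    have hr' : (1 + γ) * r ≤ 2 * γ * r := by nlinarith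
    have hS' : S ⊆ ⋃ k, ball (y (j.succAbove k)) (2 * γ * r) :=
      (hS.trans (iUnion_ball_subset_iUnion_ball_succAbove y hji.symm hd)).trans
        (iUnion_mono fun _ => ball_subset_ball hr')
    obtain ⟨M', hM', y', r', hrr', hr'le, hS'', hsep'⟩ :=
      ih (y ∘ j.succAbove) (by positivity) hS'
    refine ⟨M', hM'.trans M.le_succ, y', r', by nlinarith, ?_, hS'', hsep'⟩
    calc r' ≤ (2 * γ) ^ M * (2 * γ * r) := hr'le
      _ = (2 * γ) ^ (M + 1) * r := by ring

end SeparatedCover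

/-- **Covering with balls.** Given `N ∈ ℕ`, `γ ≥ 2`, `R₀ > 0`, every set of at most `N`
points in `ℝ^m` can be covered by `M ≤ N` pairwise disjoint open balls whose radii lie in
`[R₀, (2γ)^N R₀]` and whose centers are pairwise farther apart than `γ` times the maximal
radius. -/
theorem stmt1 {m : ℕ} (N : ℕ) (γ R₀ : ℝ) (hγ : 2 ≤ γ) (hR₀ : 0 < R₀)
    (n : ℕ) (hn : n ≤ N) (x : Fin n → EuclideanSpace ℝ (Fin m)) :
    ∃ M : ℕ, M ≤ N ∧ ∃ (y : Fin M → EuclideanSpace ℝ (Fin m)) (r : Fin M → ℝ),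
      (∀ i j : Fin M, i ≠ j → Disjoint (Metric.ball (y i) (r i)) (Metric.ball (y j) (r j))) ∧
      (∀ k : Fin n, ∃ i : Fin M, x k ∈ Metric.ball (y i) (r i)) ∧
      (∀ i : Fin M, R₀ ≤ r i ∧ r i ≤ (2 * γ) ^ N * R₀) ∧
      (∀ i j : Fin M, i < j → ∀ k : Fin M, γ * r k < dist (y i) (y j)) := by
  have hcover : range x ⊆ ⋃ k, ball (x k) R₀ :=
    range_subset_iff.mpr fun k => mem_iUnion.mpr ⟨k, mem_ball_self hR₀⟩
  obtain ⟨M, hM, y, r, hR₀r, hr, hS, hsep⟩ :=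
    exists_separated_ball_cover (by linarith : (1 : ℝ) ≤ γ) x hR₀.le hcover
  have hpow : (2 * γ) ^ n * R₀ ≤ (2 * γ) ^ N * R₀ := by gcongr; linarith
  refine ⟨M, hM.trans hn, y, fun _ => r, fun i j hij => ?_, fun k => ?_,
    fun _ => ⟨hR₀r, hr.trans hpow⟩, fun i j hij _ => hsep hij.ne⟩
  · exact ball_disjoint_ball (by nlinarith [hsep hij])
  · simpa using hS (mem_range_self k)
end

section
/- Let μ be a finite measure on a measurable space X, let 1 < p < ∞ and C > 0, and let q ∈ ℕ. Let (f_k)_k and (g_k)_k be sequences of measurable functions X → ℝ^q with ‖f_k‖_{L^p(μ)} ≤ C and ‖g_k‖_{L^p(μ)} ≤ C for all k, and suppose μ({ x : f_k(x) ≠ g_k(x) }) → 0 as k → ∞. If f_k converges weakly in L^p(μ; ℝ^q) to f (i.e. ∫ ⟨f_k, φ⟩ dμ → ∫ ⟨f, φ⟩ dμ for every φ ∈ L^{p'}(μ; ℝ^q), where p' = p/(p−1)) and g_k converges weakly in L^p(μ; ℝ^q) to g, then f = g μ-almost everywhere. -/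
/-!
Since `‖f_k - g_k‖_p ≤ 2C` and `f_k - g_k` vanishes off a set of measure tending to `0`,
Hölder's inequality on that set gives `f_k - g_k → 0` in `L¹`. Hence `∫ ⟪F - G, φ⟫ = 0` for every
measurable `φ` with `‖φ‖ ≤ 1`, and the choice `φ = (1 + ‖F - G‖)⁻¹ • (F - G)` forces `F = G` a.e.
-/

open MeasureTheory Filter Set Topology
open scoped InnerProductSpace ENNReal

section

variable {α ι E : Type*} [MeasurableSpace α] {μ : Measure α}

section NormedGroup

variable [NormedAddCommGroup E]

theorem eLpNorm_one_le_eLpNorm_mul_measure_support_rpow {h : α → E}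
    (hh : AEStronglyMeasurable h μ) {p : ℝ≥0∞} (hp : 1 ≤ p) :
    eLpNorm h 1 μ ≤ eLpNorm h p μ * μ {x | h x ≠ 0} ^ (1 - 1 / p.toReal) := by
  set s := {x | h x ≠ 0}
  calc eLpNorm h 1 μ = eLpNorm h 1 (μ.restrict s) :=
        (eLpNorm_restrict_eq_of_support_subset subset_rfl).symm
    _ ≤ eLpNorm h p (μ.restrict s) * μ.restrict s univ ^ (1 / (1 : ℝ≥0∞).toReal - 1 / p.toReal) :=
        eLpNorm_le_eLpNorm_mul_rpow_measure_univ hp hh.restrict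
    _ ≤ eLpNorm h p μ * μ s ^ (1 - 1 / p.toReal) := by
        rw [Measure.restrict_apply_univ, ENNReal.toReal_one, div_one]
        exact mul_le_mul_left (eLpNorm_restrict_le _ _ _ _) _

theorem tendsto_eLpNorm_one_of_tendsto_measure_support {l : Filter ι} {h : ι → α → E}
    {p C : ℝ≥0∞} (hp : 1 < p) (hC : C ≠ ∞) (hh : ∀ k, AEStronglyMeasurable (h k) μ)
    (hbd : ∀ k, eLpNorm (h k) p μ ≤ C)
    (hsupp : Tendsto (fun k => μ {x | h k x ≠ 0}) l (𝓝 0)) :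
    Tendsto (fun k => eLpNorm (h k) 1 μ) l (𝓝 0) := by
  have hexp : 0 < 1 - 1 / p.toReal := by
    rcases eq_or_ne p ∞ with rfl | hp_top
    · simp
    · have hp_real : 1 < p.toReal := by simpa using ENNReal.toReal_strict_mono hp_top hp
      exact sub_pos.2 ((div_lt_one (by linarith)).2 hp_real)
  have hbound : Tendsto (fun k => C * μ {x | h k x ≠ 0} ^ (1 - 1 / p.toReal)) l (𝓝 0) := by
    have := ENNReal.Tendsto.const_mul
      ((ENNReal.continuous_rpow_const (y := 1 - 1 / p.toReal)).tendsto 0 |>.comp hsupp)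
      (Or.inr hC)
    rwa [Function.comp_def, ENNReal.zero_rpow_of_pos hexp, mul_zero] at this
  refine tendsto_of_tendsto_of_tendsto_of_le_of_le tendsto_const_nhds hbound
    (fun _ => bot_le) fun k => ?_
  calc eLpNorm (h k) 1 μ ≤ eLpNorm (h k) p μ * μ {x | h k x ≠ 0} ^ (1 - 1 / p.toReal) :=
        eLpNorm_one_le_eLpNorm_mul_measure_support_rpow (hh k) hp.le
    _ ≤ C * μ {x | h k x ≠ 0} ^ (1 - 1 / p.toReal) := by gcongr; exact hbd k

end NormedGroup

section InnerProduct

variable [NormedAddCommGroup E] [InnerProductSpace ℝ E]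

theorem MeasureTheory.Integrable.inner_of_norm_le_one {h φ : α → E} (hh : Integrable h μ)
    (hφ : AEStronglyMeasurable φ μ) (hφ_le : ∀ x, ‖φ x‖ ≤ 1) :
    Integrable (fun x => ⟪h x, φ x⟫_ℝ) μ :=
  hh.norm.mono (hh.1.inner (𝕜 := ℝ) hφ) <| ae_of_all _ fun x => by
    simpa using (norm_inner_le_norm (𝕜 := ℝ) (h x) (φ x)).trans
      (mul_le_of_le_one_right (norm_nonneg _) (hφ_le x))

theorem enorm_integral_inner_le_eLpNorm_one {h φ : α → E} (hφ_le : ∀ x, ‖φ x‖ ≤ 1) :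
    ‖∫ x, ⟪h x, φ x⟫_ℝ ∂μ‖ₑ ≤ eLpNorm h 1 μ := by
  rw [eLpNorm_one_eq_lintegral_enorm]
  refine (enorm_integral_le_lintegral_enorm _).trans (lintegral_mono fun x => ?_)
  rw [← ofReal_norm, ← ofReal_norm]
  exact ENNReal.ofReal_le_ofReal <| (norm_inner_le_norm (h x) (φ x)).trans
    (mul_le_of_le_one_right (norm_nonneg _) (hφ_le x))

theorem tendsto_integral_inner_of_tendsto_eLpNorm_one {l : Filter ι} {h : ι → α → E} {φ : α → E}
    (hφ_le : ∀ x, ‖φ x‖ ≤ 1) (hh : Tendsto (fun k => eLpNorm (h k) 1 μ) l (𝓝 0)) :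
    Tendsto (fun k => ∫ x, ⟪h k x, φ x⟫_ℝ ∂μ) l (𝓝 0) :=
  tendsto_zero_iff_enorm_tendsto_zero.2 <| tendsto_of_tendsto_of_tendsto_of_le_of_le
    tendsto_const_nhds hh (fun _ => bot_le) fun _ => enorm_integral_inner_le_eLpNorm_one hφ_le

theorem ae_eq_of_forall_integral_inner_eq {F G : α → E} (hF : Integrable F μ)
    (hG : Integrable G μ)
    (h : ∀ φ : α → E, AEStronglyMeasurable φ μ → (∀ x, ‖φ x‖ ≤ 1) →
      ∫ x, ⟪F x, φ x⟫_ℝ ∂μ = ∫ x, ⟪G x, φ x⟫_ℝ ∂μ) :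
    F =ᵐ[μ] G := by
  set d := F - G
  set φ : α → E := fun x => (1 + ‖d x‖)⁻¹ • d x
  have hφ : AEStronglyMeasurable φ μ :=
    ((hF.sub hG).1.norm.aemeasurable.const_add 1).inv.aestronglyMeasurable.smul (hF.sub hG).1
  have hφ_le : ∀ x, ‖φ x‖ ≤ 1 := fun x => by
    rw [norm_smul, norm_inv, Real.norm_of_nonneg (by positivity), inv_mul_le_one₀ (by positivity)]
    linarith
  have hinner : ∀ x, ⟪d x, φ x⟫_ℝ = (1 + ‖d x‖)⁻¹ * ‖d x‖ ^ 2 := fun x => by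
    rw [real_inner_smul_right, real_inner_self_eq_norm_sq]
  have hzero : ∫ x, ⟪d x, φ x⟫_ℝ ∂μ = 0 := by
    simp only [d, Pi.sub_apply, inner_sub_left]
    rw [integral_sub (hF.inner_of_norm_le_one hφ hφ_le) (hG.inner_of_norm_le_one hφ hφ_le),
      h φ hφ hφ_le, sub_self]
  have hae := (integral_eq_zero_iff_of_nonneg (fun x => by
    rw [Pi.zero_apply, hinner]; positivity)
    ((hF.sub hG).inner_of_norm_le_one hφ hφ_le)).1 hzero
  filter_upwards [hae] with x hx
  rw [Pi.zero_apply, hinner, mul_eq_zero, inv_eq_zero, pow_eq_zero_iff two_ne_zero,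
    norm_eq_zero] at hx
  exact sub_eq_zero.1 (hx.resolve_left (by positivity))

end InnerProduct

end

theorem stmt2_general {X : Type*} [MeasurableSpace X] (μ : Measure X) [IsFiniteMeasure μ]
    (p : ℝ) (hp : 1 < p) (C : ℝ) (q : ℕ)
    (f g : ℕ → X → EuclideanSpace ℝ (Fin q))
    (F G : X → EuclideanSpace ℝ (Fin q))
    (hfmem : ∀ k, MemLp (f k) (ENNReal.ofReal p) μ)
    (hgmem : ∀ k, MemLp (g k) (ENNReal.ofReal p) μ)
    (hfbd : ∀ k, eLpNorm (f k) (ENNReal.ofReal p) μ ≤ ENNReal.ofReal C)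
    (hgbd : ∀ k, eLpNorm (g k) (ENNReal.ofReal p) μ ≤ ENNReal.ofReal C)
    (hFmem : MemLp F (ENNReal.ofReal p) μ) (hGmem : MemLp G (ENNReal.ofReal p) μ)
    (hdiff : Tendsto (fun k => μ {x | f k x ≠ g k x}) atTop (𝓝 0))
    (hfconv : ∀ φ : X → EuclideanSpace ℝ (Fin q),
      MemLp φ (ENNReal.ofReal (p / (p - 1))) μ →
      Tendsto (fun k => ∫ x, ⟪f k x, φ x⟫_ℝ ∂μ) atTop (𝓝 (∫ x, ⟪F x, φ x⟫_ℝ ∂μ)))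
    (hgconv : ∀ φ : X → EuclideanSpace ℝ (Fin q),
      MemLp φ (ENNReal.ofReal (p / (p - 1))) μ →
      Tendsto (fun k => ∫ x, ⟪g k x, φ x⟫_ℝ ∂μ) atTop (𝓝 (∫ x, ⟪G x, φ x⟫_ℝ ∂μ))) :
    F =ᵐ[μ] G := by
  have hp1 : 1 ≤ ENNReal.ofReal p := ENNReal.one_le_ofReal.2 hp.le
  have hdiff_L1 : Tendsto (fun k => eLpNorm (f k - g k) 1 μ) atTop (𝓝 0) :=
    tendsto_eLpNorm_one_of_tendsto_measure_support (ENNReal.one_lt_ofReal.2 hp)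
      (ENNReal.add_ne_top.2 ⟨ENNReal.ofReal_ne_top, ENNReal.ofReal_ne_top⟩)
      (fun k => (hfmem k).1.sub (hgmem k).1)
      (fun k => (eLpNorm_sub_le (hfmem k).1 (hgmem k).1 hp1).trans
        (add_le_add (hfbd k) (hgbd k)))
      (by simpa only [Pi.sub_apply, sub_ne_zero] using hdiff)
  refine ae_eq_of_forall_integral_inner_eq (hFmem.integrable hp1) (hGmem.integrable hp1)
    fun φ hφ hφ_le => ?_
  have hφmem : MemLp φ (ENNReal.ofReal (p / (p - 1))) μ := .of_bound hφ 1 (ae_of_all _ hφ_le)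
  have hsub : Tendsto (fun k => ∫ x, ⟪f k x, φ x⟫_ℝ ∂μ - ∫ x, ⟪g k x, φ x⟫_ℝ ∂μ)
      atTop (𝓝 0) := by
    refine (tendsto_integral_inner_of_tendsto_eLpNorm_one hφ_le hdiff_L1).congr fun k => ?_
    simp only [Pi.sub_apply, inner_sub_left]
    exact integral_sub (((hfmem k).integrable hp1).inner_of_norm_le_one hφ hφ_le)
      (((hgmem k).integrable hp1).inner_of_norm_le_one hφ hφ_le)
  exact sub_eq_zero.1 (tendsto_nhds_unique ((hfconv φ hφmem).sub (hgconv φ hφmem)) hsub)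

/-- If two `L^p`-bounded sequences `(f_k)`, `(g_k)` differ only on sets of vanishing measure
and converge weakly in `L^p(μ; ℝ^q)` to `F` and `G` respectively, then `F = G` μ-a.e. -/
theorem stmt2 {X : Type*} [MeasurableSpace X] (μ : Measure X) [IsFiniteMeasure μ]
    (p : ℝ) (hp : 1 < p) (C : ℝ) (hC : 0 < C) (q : ℕ)
    (f g : ℕ → X → EuclideanSpace ℝ (Fin q))
    (F G : X → EuclideanSpace ℝ (Fin q))
    (hfmem : ∀ k, MemLp (f k) (ENNReal.ofReal p) μ)
    (hgmem : ∀ k, MemLp (g k) (ENNReal.ofReal p) μ)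
    (hfbd : ∀ k, eLpNorm (f k) (ENNReal.ofReal p) μ ≤ ENNReal.ofReal C)
    (hgbd : ∀ k, eLpNorm (g k) (ENNReal.ofReal p) μ ≤ ENNReal.ofReal C)
    (hFmem : MemLp F (ENNReal.ofReal p) μ) (hGmem : MemLp G (ENNReal.ofReal p) μ)
    (hdiff : Tendsto (fun k => μ {x | f k x ≠ g k x}) atTop (𝓝 0))
    (hfconv : ∀ φ : X → EuclideanSpace ℝ (Fin q),
      MemLp φ (ENNReal.ofReal (p / (p - 1))) μ →
      Tendsto (fun k => ∫ x, ⟪f k x, φ x⟫_ℝ ∂μ) atTop (𝓝 (∫ x, ⟪F x, φ x⟫_ℝ ∂μ)))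
    (hgconv : ∀ φ : X → EuclideanSpace ℝ (Fin q),
      MemLp φ (ENNReal.ofReal (p / (p - 1))) μ →
      Tendsto (fun k => ∫ x, ⟪g k x, φ x⟫_ℝ ∂μ) atTop (𝓝 (∫ x, ⟪G x, φ x⟫_ℝ ∂μ))) :
    F =ᵐ[μ] G :=
  stmt2_general μ p hp C q f g F G hfmem hgmem hfbd hgbd hFmem hGmem hdiff hfconv hgconv
end

section
/- Let (X, μ) be a finite measure space, q ∈ ℕ, and C ≥ 0. For each m ∈ ℕ let (P_j^m)_{j ≥ 0} be a countable measurable partition of X (i.e. the sets P_j^m, j = 0,1,2,…, are pairwise disjoint, measurable, and cover X) with μ(P_0^m) ≤ C · 2^{−m}, and assume ∑_{j ≥ 0} μ(P_j^{m+1} △ P_j^m) ≤ 3 · 2^{−m} for every m. Let (t_j^m)_{j ≥ 1} ⊂ ℝ^q be vectors satisfying: t_j^{m+1} = t_j^m whenever μ(P_j^{m+1} ∩ P_j^m) > 0 (for every j ≥ 1 and m). Let u, h : X → ℝ^q be measurable and define v^m := h·χ_{P_0^m} + ∑_{j ≥ 1} (u − t_j^m)·χ_{P_j^m}. Then for all n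 ≤ l one has μ( X ∖ ⋂_{n ≤ m ≤ l} { x ∈ X : v^m(x) = v^n(x) } ) ≤ (3C + 6) · 2^{−n}. -/
/-!
If `v^{m+1}(x) ≠ v^m(x)`, then `x` lies in one of the rest sets `P_0^{m+1}`, `P_0^m`, or it
changes component between the two partitions (so it lies in some `P_j^{m+1} △ P_j^m`), or it
stays in a component `P_j` with `μ(P_j^{m+1} ∩ P_j^m) = 0`; everywhere else the translation is
unchanged. Hence `μ{v^{m+1} ≠ v^m} ≤ (3C/2 + 3) 2^{-m}`, and the set where `v^m` leaves `v^n`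
for some `m ∈ [n, l]` is covered by the sets `{v^{m+1} ≠ v^m}`, `n ≤ m < l`, whose measures form
a geometric series summing to at most `(3C + 6) 2^{-n}`.
-/

open MeasureTheory Set Function

lemma univ_diff_iInter_setOf_eq_subset_biUnion {α β : Type*} (v : ℕ → α → β) (n l : ℕ) :
    univ \ ⋂ m ∈ Icc n l, {x | v m x = v n x} ⊆
      ⋃ m ∈ Finset.Ico n l, {x | v (m + 1) x ≠ v m x} := by
  intro x hx
  by_contra hstable
  simp only [Finset.mem_Ico, mem_iUnion, mem_ofPred_eq, exists_prop, not_exists, not_and,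
    not_not] at hstable
  refine hx.2 (mem_iInter₂.mpr fun m hm => ?_)
  obtain ⟨hnm, hml⟩ := hm
  induction m, hnm using Nat.le_induction with
  | base => rfl
  | succ k hnk ih => exact (hstable k ⟨hnk, hml⟩).trans (ih (Nat.le_of_succ_le hml))

section PiecewiseTranslation

variable {X E : Type*} [MeasurableSpace X] [Sub E] {μ : Measure X} {P : ℕ → ℕ → Set X}
  {t : ℕ → ℕ → E} {u : X → E} {v : ℕ → X → E}

lemma setOf_ne_succ_subset (m : ℕ) (hdisj : Pairwise (Disjoint on (P m)))
    (hcover : ∀ m, ⋃ j, P m j = univ)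
    (ht : ∀ j ≥ 1, 0 < μ (P (m + 1) j ∩ P m j) → t (m + 1) j = t m j)
    (hvj : ∀ m, ∀ j ≥ 1, ∀ x ∈ P m j, v m x = u x - t m j) :
    {x | v (m + 1) x ≠ v m x} ⊆
      P (m + 1) 0 ∪ P m 0 ∪ (⋃ j, symmDiff (P (m + 1) j) (P m j)) ∪
        ⋃ (j) (_ : μ (P (m + 1) j ∩ P m j) = 0), P (m + 1) j ∩ P m j := by
  intro x hx
  obtain ⟨j, hj⟩ := mem_iUnion.mp ((hcover (m + 1)).symm ▸ mem_univ x)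
  obtain ⟨k, hk⟩ := mem_iUnion.mp ((hcover m).symm ▸ mem_univ x)
  rcases Nat.eq_zero_or_pos j with rfl | hj1
  · exact Or.inl (Or.inl (Or.inl hj))
  rcases Nat.eq_zero_or_pos k with rfl | hk1
  · exact Or.inl (Or.inl (Or.inr hk))
  obtain rfl | hjk := eq_or_ne j k
  · refine Or.inr (mem_biUnion (x := j) ?_ ⟨hj, hk⟩)
    by_contra hpos
    exact hx (by rw [hvj _ j hj1 x hj, hvj m j hj1 x hk, ht j hj1 (pos_iff_ne_zero.mpr hpos)])
  · have hj' : x ∉ P m j := fun hxj => (hdisj hjk).ne_of_mem hxj hk rfl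
    exact Or.inl (Or.inr (mem_iUnion.mpr ⟨j, Or.inl ⟨hj, hj'⟩⟩))

lemma measure_setOf_ne_succ_le (m : ℕ) (hdisj : Pairwise (Disjoint on (P m)))
    (hcover : ∀ m, ⋃ j, P m j = univ)
    (ht : ∀ j ≥ 1, 0 < μ (P (m + 1) j ∩ P m j) → t (m + 1) j = t m j)
    (hvj : ∀ m, ∀ j ≥ 1, ∀ x ∈ P m j, v m x = u x - t m j) :
    μ {x | v (m + 1) x ≠ v m x} ≤
      μ (P (m + 1) 0) + μ (P m 0) + ∑' j, μ (symmDiff (P (m + 1) j) (P m j)) := by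
  have hnull : μ (⋃ (j) (_ : μ (P (m + 1) j ∩ P m j) = 0), P (m + 1) j ∩ P m j) = 0 :=
    measure_iUnion_null fun _ => measure_iUnion_null id
  calc μ {x | v (m + 1) x ≠ v m x}
      ≤ μ (P (m + 1) 0 ∪ P m 0 ∪ (⋃ j, symmDiff (P (m + 1) j) (P m j))) := by
        refine (measure_mono (setOf_ne_succ_subset m hdisj hcover ht hvj)).trans ?_
        exact (measure_union_le _ _).trans (by rw [hnull, add_zero])
    _ ≤ _ := (measure_union_le _ _).trans <|
        add_le_add (measure_union_le _ _) (measure_iUnion_le _)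

end PiecewiseTranslation

lemma geom_half_sum_Ico_le (n l : ℕ) : ∑ m ∈ Finset.Ico n l, ((1 : ℝ) / 2) ^ m ≤ 2 * (1 / 2) ^ n :=
  (geom_sum_Ico_le_of_lt_one (by norm_num) (by norm_num)).trans_eq (by ring)

theorem stmt3_general {X : Type*} [MeasurableSpace X] (μ : Measure X)
    (q : ℕ) (C : ℝ) (hC : 0 ≤ C)
    (P : ℕ → ℕ → Set X)
    (hdisj : ∀ m, Pairwise (Disjoint on (P m)))
    (hcover : ∀ m, ⋃ j, P m j = Set.univ)
    (hP0 : ∀ m, μ (P m 0) ≤ ENNReal.ofReal (C * (1 / 2) ^ m))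
    (hΔ : ∀ m, ∑' j, μ (symmDiff (P (m + 1) j) (P m j)) ≤ ENNReal.ofReal (3 * (1 / 2) ^ m))
    (t : ℕ → ℕ → EuclideanSpace ℝ (Fin q))
    (ht : ∀ m, ∀ j ≥ 1, 0 < μ (P (m + 1) j ∩ P m j) → t (m + 1) j = t m j)
    (u : X → EuclideanSpace ℝ (Fin q))
    (v : ℕ → X → EuclideanSpace ℝ (Fin q))
    (hvj : ∀ m, ∀ j ≥ 1, ∀ x ∈ P m j, v m x = u x - t m j) :
    ∀ n l, n ≤ l →
      μ (Set.univ \ ⋂ m ∈ Set.Icc n l, {x | v m x = v n x}) ≤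
        ENNReal.ofReal ((3 * C + 6) * (1 / 2) ^ n) := by
  intro n l _
  have hstep (m : ℕ) : μ {x | v (m + 1) x ≠ v m x} ≤
      ENNReal.ofReal ((3 * C / 2 + 3) * (1 / 2) ^ m) := by
    refine (measure_setOf_ne_succ_le m (hdisj m) hcover (ht m) hvj).trans <|
      (add_le_add (add_le_add (hP0 (m + 1)) (hP0 m)) (hΔ m)).trans_eq ?_
    rw [← ENNReal.ofReal_add (by positivity) (by positivity),
      ← ENNReal.ofReal_add (by positivity) (by positivity)]
    ring_nf
  calc μ (univ \ ⋂ m ∈ Icc n l, {x | v m x = v n x})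
      ≤ ∑ m ∈ Finset.Ico n l, μ {x | v (m + 1) x ≠ v m x} :=
        (measure_mono (univ_diff_iInter_setOf_eq_subset_biUnion v n l)).trans
          (measure_biUnion_finset_le _ _)
    _ ≤ ENNReal.ofReal (∑ m ∈ Finset.Ico n l, (3 * C / 2 + 3) * (1 / 2) ^ m) := by
        rw [ENNReal.ofReal_sum_of_nonneg fun m _ => by positivity]
        exact Finset.sum_le_sum fun m _ => hstep m
    _ ≤ ENNReal.ofReal ((3 * C + 6) * (1 / 2) ^ n) := by
        rw [← Finset.mul_sum]
        exact ENNReal.ofReal_le_ofReal <|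
          (mul_le_mul_of_nonneg_left (geom_half_sum_Ico_le n l) (by positivity)).trans_eq (by ring)

/-- **Step 4 stability estimate.** For partitions `(P_j^m)_{j≥0}` of `X` with small rest sets
`P_0^m` and dyadically small symmetric differences, and translations `t_j^m` that are kept
fixed on overlapping components, the piecewise translated functions
`v^m = h χ_{P_0^m} + Σ_{j≥1} (u - t_j^m) χ_{P_j^m}` satisfy
`μ(X ∖ ⋂_{n ≤ m ≤ l} {v^m = v^n}) ≤ (3C + 6) 2^{-n}`. -/
theorem stmt3 {X : Type*} [MeasurableSpace X] (μ : Measure X) [IsFiniteMeasure μ]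
    (q : ℕ) (C : ℝ) (hC : 0 ≤ C)
    (P : ℕ → ℕ → Set X)
    (hmeas : ∀ m j, MeasurableSet (P m j))
    (hdisj : ∀ m, Pairwise (Disjoint on (P m)))
    (hcover : ∀ m, ⋃ j, P m j = Set.univ)
    (hP0 : ∀ m, μ (P m 0) ≤ ENNReal.ofReal (C * (1 / 2) ^ m))
    (hΔ : ∀ m, ∑' j, μ (symmDiff (P (m + 1) j) (P m j)) ≤ ENNReal.ofReal (3 * (1 / 2) ^ m))
    (t : ℕ → ℕ → EuclideanSpace ℝ (Fin q))
    (ht : ∀ m, ∀ j ≥ 1, 0 < μ (P (m + 1) j ∩ P m j) → t (m + 1) j = t m j)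
    (u h : X → EuclideanSpace ℝ (Fin q))
    (v : ℕ → X → EuclideanSpace ℝ (Fin q))
    (hv0 : ∀ m, ∀ x ∈ P m 0, v m x = h x)
    (hvj : ∀ m, ∀ j ≥ 1, ∀ x ∈ P m j, v m x = u x - t m j) :
    ∀ n l, n ≤ l →
      μ (Set.univ \ ⋂ m ∈ Set.Icc n l, {x | v m x = v n x}) ≤
        ENNReal.ofReal ((3 * C + 6) * (1 / 2) ^ n) :=
  stmt3_general μ q C hC P hdisj hcover hP0 hΔ t ht u v hvj
end

section
/- Let (X, μ) be a finite measure space, q ∈ ℕ, and c ≥ 0. For each l ∈ ℕ let v^l : X → ℝ^q be measurable, and let (v^l_k)_k be measurable functions X → ℝ^q with v^l_k → v^l in measure as k → ∞ (for each fixed l). Suppose that for all natural numbers n ≤ l ≤ k one has μ( X ∖ ⋂_{n ≤ m ≤ l} { x ∈ X : v^m_k(x) = v^n_k(x) } ) ≤ c · 2^{−n}. Then μ( ⋂_{n ∈ ℕ} ⋃_{m ≥ n} { x ∈ X : |v^m(x) − v^n(x)| > 1 } ) = 0. -/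
open MeasureTheory Filter Set Topology
open scoped ENNReal

/-! If `w^m_k = w^n_k` and both lie within `ε/2` of their limits, then `|v^m - v^n| ≤ ε`. So for
`k ≥ l` the set where some `|v^m - v^n| > ε` with `n ≤ m ≤ l` is covered by finitely many sets of
the form `{|w^m_k - v^m| > ε/2}`, whose measures tend to `0` as `k → ∞`, together with a set of
measure at most `c 2^{-n}`. Letting `l → ∞` bounds `μ(⋃_{m ≥ n} {|v^m - v^n| > ε})` by `c 2^{-n}`,
and then `n → ∞` makes the limit superior null. -/

section

variable {X E : Type*} [SeminormedAddCommGroup E]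

lemma biUnion_Icc_lt_norm_sub_subset (v : ℕ → X → E) (w : ℕ → X → E) {ε : ℝ} (n l : ℕ) :
    ⋃ m ∈ Icc n l, {x | ε < ‖v m x - v n x‖} ⊆
      (⋃ m ∈ Finset.Icc n l, {x | ε / 2 < ‖w m x - v m x‖}) ∪
        (univ \ ⋂ m ∈ Icc n l, {x | w m x = w n x}) := by
  intro x hx
  obtain ⟨m, hm, hεx⟩ := mem_iUnion₂.1 hx
  by_cases hagree : x ∈ ⋂ m ∈ Icc n l, {x | w m x = w n x}
  swap
  · exact Or.inr ⟨mem_univ x, hagree⟩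
  refine Or.inl (by_contra fun hfar => ?_)
  simp only [mem_iUnion₂, Finset.mem_Icc, mem_ofPred_eq, not_exists, not_lt] at hfar
  have hwm : w m x = w n x := mem_iInter₂.1 hagree m hm
  have hm' : ‖v m x - w m x‖ ≤ ε / 2 := by rw [norm_sub_rev]; exact hfar m hm
  have hn' : ‖w n x - v n x‖ ≤ ε / 2 := hfar n ⟨le_rfl, hm.1.trans hm.2⟩
  have : ‖v m x - v n x‖ ≤ ε := calc
    ‖v m x - v n x‖ = ‖(v m x - w m x) + (w n x - v n x)‖ := by rw [hwm]; abel_nf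
    _ ≤ ‖v m x - w m x‖ + ‖w n x - v n x‖ := norm_add_le _ _
    _ ≤ ε / 2 + ε / 2 := add_le_add hm' hn'
    _ = ε := add_halves ε
  exact hεx.not_ge this

variable [MeasurableSpace X] {μ : Measure X}

lemma measure_biUnion_Ici_le_of_forall_Icc {s : ℕ → Set X} {b : ℝ≥0∞} (n : ℕ)
    (h : ∀ l, n ≤ l → μ (⋃ m ∈ Icc n l, s m) ≤ b) : μ (⋃ m ∈ Ici n, s m) ≤ b := by
  have hunion : ⋃ m ∈ Ici n, s m = ⋃ j : ℕ, ⋃ m ∈ Icc n (n + j), s m := by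
    ext x
    simp only [mem_iUnion, exists_prop, mem_Ici, mem_Icc]
    constructor
    · rintro ⟨m, hnm, hx⟩; exact ⟨m, m, ⟨hnm, by omega⟩, hx⟩
    · rintro ⟨-, m, ⟨hnm, -⟩, hx⟩; exact ⟨m, hnm, hx⟩
  have hmono : Monotone fun j : ℕ => ⋃ m ∈ Icc n (n + j), s m := fun _ _ hab =>
    biUnion_subset_biUnion_left (Icc_subset_Icc le_rfl (by omega))
  rw [hunion, hmono.measure_iUnion]
  exact iSup_le fun j => h (n + j) (by omega)

variable (v : ℕ → X → E) (w : ℕ → ℕ → X → E) {b : ℕ → ℝ≥0∞} {ε : ℝ}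

lemma measure_biUnion_Icc_lt_norm_sub_le
    (hconv : ∀ m, Tendsto (fun k => μ {x | ε / 2 < ‖w m k x - v m x‖}) atTop (𝓝 0))
    (hagree : ∀ n l k, n ≤ l → l ≤ k →
      μ (univ \ ⋂ m ∈ Icc n l, {x | w m k x = w n k x}) ≤ b n) (n l : ℕ) (hnl : n ≤ l) :
    μ (⋃ m ∈ Icc n l, {x | ε < ‖v m x - v n x‖}) ≤ b n := by
  have hbound : ∀ k, l ≤ k → μ (⋃ m ∈ Icc n l, {x | ε < ‖v m x - v n x‖}) ≤
      (∑ m ∈ Finset.Icc n l, μ {x | ε / 2 < ‖w m k x - v m x‖}) + b n := fun k hk => calc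
    _ ≤ μ ((⋃ m ∈ Finset.Icc n l, {x | ε / 2 < ‖w m k x - v m x‖}) ∪
          (univ \ ⋂ m ∈ Icc n l, {x | w m k x = w n k x})) :=
        measure_mono (biUnion_Icc_lt_norm_sub_subset v (fun m => w m k) n l)
    _ ≤ μ (⋃ m ∈ Finset.Icc n l, {x | ε / 2 < ‖w m k x - v m x‖}) +
          μ (univ \ ⋂ m ∈ Icc n l, {x | w m k x = w n k x}) := measure_union_le _ _
    _ ≤ _ := add_le_add (measure_biUnion_finset_le _ _) (hagree n l k hnl hk)
  have hlim : Tendsto (fun k => (∑ m ∈ Finset.Icc n l, μ {x | ε / 2 < ‖w m k x - v m x‖}) + b n)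
      atTop (𝓝 (b n)) := by
    simpa using (tendsto_finsetSum _ fun m _ => hconv m).add_const (b n)
  exact ge_of_tendsto hlim (eventually_atTop.2 ⟨l, hbound⟩)

theorem measure_limsup_lt_norm_sub_eq_zero
    (hconv : ∀ m, Tendsto (fun k => μ {x | ε / 2 < ‖w m k x - v m x‖}) atTop (𝓝 0))
    (hagree : ∀ n l k, n ≤ l → l ≤ k →
      μ (univ \ ⋂ m ∈ Icc n l, {x | w m k x = w n k x}) ≤ b n)
    (hb : Tendsto b atTop (𝓝 0)) :
    μ (⋂ n, ⋃ m ∈ Ici n, {x | ε < ‖v m x - v n x‖}) = 0 := by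
  have hle : ∀ n, μ (⋂ n, ⋃ m ∈ Ici n, {x | ε < ‖v m x - v n x‖}) ≤ b n := fun n =>
    (measure_mono (iInter_subset _ n)).trans <| measure_biUnion_Ici_le_of_forall_Icc n <|
      measure_biUnion_Icc_lt_norm_sub_le v w hconv hagree n
  exact le_antisymm (ge_of_tendsto hb (Eventually.of_forall hle)) zero_le

end

theorem stmt4_general {X : Type*} [MeasurableSpace X] (μ : Measure X)
    (q : ℕ) (c : ℝ)
    (v : ℕ → X → EuclideanSpace ℝ (Fin q))
    (w : ℕ → ℕ → X → EuclideanSpace ℝ (Fin q))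
    (hconv : ∀ l, ∀ ε > (0:ℝ),
      Tendsto (fun k => μ {x | ε < ‖w l k x - v l x‖}) atTop (𝓝 0))
    (hcauchy : ∀ n l k, n ≤ l → l ≤ k →
      μ (Set.univ \ ⋂ m ∈ Set.Icc n l, {x | w m k x = w n k x}) ≤
        ENNReal.ofReal (c * (1 / 2) ^ n)) :
    μ (⋂ n, ⋃ m ∈ Set.Ici n, {x | 1 < ‖v m x - v n x‖}) = 0 := by
  have hgeom : Tendsto (fun n : ℕ => ENNReal.ofReal (c * (1 / 2) ^ n)) atTop (𝓝 0) := by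
    have hpow : Tendsto (fun n : ℕ => (1 / 2 : ℝ) ^ n) atTop (𝓝 0) :=
      tendsto_pow_atTop_nhds_zero_of_lt_one (by norm_num) (by norm_num)
    simpa using ENNReal.tendsto_ofReal (hpow.const_mul c)
  exact measure_limsup_lt_norm_sub_eq_zero v w
    (fun m => hconv m _ one_half_pos) hcauchy hgeom

/-- **Step 4 deduction.** If `w^m_k → v^m` in measure for each `m`, and for all `n ≤ l ≤ k`
one has `μ(X ∖ ⋂_{n ≤ m ≤ l} {w^m_k = w^n_k}) ≤ c 2^{-n}`, then the limit functions satisfy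
`μ(⋂_n ⋃_{m ≥ n} {|v^m - v^n| > 1}) = 0`. -/
theorem stmt4 {X : Type*} [MeasurableSpace X] (μ : Measure X) [IsFiniteMeasure μ]
    (q : ℕ) (c : ℝ) (hc : 0 ≤ c)
    (v : ℕ → X → EuclideanSpace ℝ (Fin q))
    (w : ℕ → ℕ → X → EuclideanSpace ℝ (Fin q))
    (hconv : ∀ l, ∀ ε > (0:ℝ),
      Tendsto (fun k => μ {x | ε < ‖w l k x - v l x‖}) atTop (𝓝 0))
    (hcauchy : ∀ n l k, n ≤ l → l ≤ k →
      μ (Set.univ \ ⋂ m ∈ Set.Icc n l, {x | w m k x = w n k x}) ≤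
        ENNReal.ofReal (c * (1 / 2) ^ n)) :
    μ (⋂ n, ⋃ m ∈ Set.Ici n, {x | 1 < ‖v m x - v n x‖}) = 0 :=
  stmt4_general μ q c v w hconv hcauchy
end
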